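/- arXiv:2604.03009 — 2 statements merged into one kernel-verified Lean document; each statement's English description precedes it below -/
import Mathlib

section
/- Let m, k > 0 and let y : ℝ → ℝ be C³. Suppose there exist ξ₁, ξ₂ : ℝ → ℝ with ξ₁' = ξ₂, ξ₂'(t) = −(k/m)ξ₁(t) + (1/m)ξ₂(t) − (1/m)y(t−1), and −y(t+1) = −2ξ₂(t) + y(t−1) for all t. Then y satisfies the neutral functional differential equation y''(t+1) − (1/m) y'(t+1) + (k/m) y(t+1) + y''(t−1) + (1/m) y'(t−1) + (k/m) y(t−1) = 0 for all t. -/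
/-- Neutral functional differential equation satisfied by the output of the
string–mass–spring system after eliminating the lumped states. -/
theorem stmt_9 (m k : ℝ) (hm : 0 < m) (hk : 0 < k)
    (y : ℝ → ℝ) (hy : ContDiff ℝ 3 y)
    (ξ₁ ξ₂ : ℝ → ℝ)
    (h1 : ∀ t : ℝ, HasDerivAt ξ₁ (ξ₂ t) t)
    (h2 : ∀ t : ℝ, HasDerivAt ξ₂ (-(k/m) * ξ₁ t + (1/m) * ξ₂ t - (1/m) * y (t-1)) t)
    (hbc : ∀ t : ℝ, -y (t+1) = -2 * ξ₂ t + y (t-1)) :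
    ∀ t : ℝ,
      deriv (deriv y) (t+1) - (1/m) * deriv y (t+1) + (k/m) * y (t+1) +
        deriv (deriv y) (t-1) + (1/m) * deriv y (t-1) + (k/m) * y (t-1) = 0 := by
  have hm0 : m ≠ 0 := ne_of_gt hm
  have hy1 : ∀ x : ℝ, HasDerivAt y (deriv y x) x := fun x =>
    ((hy.differentiable (by norm_num)) x).hasDerivAt
  have hdy : ContDiff ℝ 2 (deriv y) := by
    have : (3 : WithTop ℕ∞) = 2 + 1 := by norm_num
    rw [this, contDiff_succ_iff_deriv] at hy
    exact hy.2.2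
  have hy2 : ∀ x : ℝ, HasDerivAt (deriv y) (deriv (deriv y) x) x := fun x =>
    ((hdy.differentiable (by norm_num)) x).hasDerivAt
  -- shifted derivatives
  have shift : ∀ (f : ℝ → ℝ) (f' : ℝ → ℝ), (∀ x, HasDerivAt f (f' x) x) →
      ∀ (c t : ℝ), HasDerivAt (fun s => f (s + c)) (f' (t + c)) t := by
    intro f f' hf c t
    have h := (hf (t + c)).comp t ((hasDerivAt_id t).add_const c)
    rw [mul_one] at h
    exact h
  -- ξ₂ closed form
  have hξ2 : ξ₂ = fun t => (y (t + 1) + y (t - 1)) / 2 := by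
    funext t; have := hbc t; linarith
  -- derivative of the closed form
  have hg : ∀ t : ℝ, HasDerivAt (fun s => (y (s + 1) + y (s - 1)) / 2)
      ((deriv y (t + 1) + deriv y (t - 1)) / 2) t := by
    intro t
    have h1' := shift y (deriv y) hy1 1 t
    have h2' := shift y (deriv y) hy1 (-1) t
    simp only [← sub_eq_add_neg] at h2'
    exact (h1'.add h2').div_const 2
  -- first identity: f t = (y'(t+1)+y'(t-1))/2
  have hkey : ∀ t : ℝ, -(k/m) * ξ₁ t + (1/m) * ξ₂ t - (1/m) * y (t-1)
      = (deriv y (t + 1) + deriv y (t - 1)) / 2 := by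
    intro t
    have h2t := h2 t
    rw [hξ2] at h2t ⊢
    exact h2t.unique (hg t)
  -- derivative of f
  have hF : ∀ t : ℝ, HasDerivAt (fun s => -(k/m) * ξ₁ s + (1/m) * ξ₂ s - (1/m) * y (s-1))
      (-(k/m) * ξ₂ t + (1/m) * (-(k/m) * ξ₁ t + (1/m) * ξ₂ t - (1/m) * y (t-1))
        - (1/m) * deriv y (t - 1)) t := by
    intro t
    have hs := shift y (deriv y) hy1 (-1) t
    simp only [← sub_eq_add_neg] at hs
    exact (((h1 t).const_mul (-(k/m))).add ((h2 t).const_mul (1/m))).sub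
      (hs.const_mul (1/m))
  -- derivative of (y'(s+1)+y'(s-1))/2
  have hG : ∀ t : ℝ, HasDerivAt (fun s => (deriv y (s + 1) + deriv y (s - 1)) / 2)
      ((deriv (deriv y) (t + 1) + deriv (deriv y) (t - 1)) / 2) t := by
    intro t
    have h1' := shift (deriv y) (deriv (deriv y)) hy2 1 t
    have h2' := shift (deriv y) (deriv (deriv y)) hy2 (-1) t
    simp only [← sub_eq_add_neg] at h2'
    exact (h1'.add h2').div_const 2
  intro t
  have hFt := hF t
  have : (fun s => -(k/m) * ξ₁ s + (1/m) * ξ₂ s - (1/m) * y (s-1))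
      = fun s => (deriv y (s + 1) + deriv y (s - 1)) / 2 := funext hkey
  rw [this] at hFt
  have heq := hFt.unique (hG t)
  have hk2 := hkey t
  have hx2 : ξ₂ t = (y (t + 1) + y (t - 1)) / 2 := by rw [hξ2]
  rw [hk2, hx2] at heq
  linear_combination (-2 : ℝ) * heq
end

section
/- Let a₀, …, a_{n−1} ∈ ℝ, τ̂ > 0, α' ∈ C⁰([0, τ̂]), and y : ℝ → ℝ be Cⁿ satisfying the neutral FDE Σ_{i=0}^{n−1} aᵢ y⁽ⁱ⁾(t) + y⁽ⁿ⁾(t+τ̂) + y⁽ⁿ⁾(t) + ∫_0^τ̂ α'(τ) y⁽ⁿ⁾(t+τ) dτ = 0 for all t. Define, for i = 0,…,n−1, η_{n−i}(t) = y⁽ⁱ⁾(t+τ̂) + y⁽ⁱ⁾(t) + ∫_0^τ̂ α'(τ) y⁽ⁱ⁾(t+τ) dτ + Σ_{j=1}^{i} a_{n−j} y⁽ⁱ⁻ʲ⁾(t). Then η₁'(t) = −a₀ y(t) and η_i'(t) = η_{i−1}(t) − a_{i−1} y(t) for i = 2, …, n, for all t. -/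
open intervalIntegral Finset

private lemma hasDerivAt_iter {n : ℕ} {y : ℝ → ℝ} (hy : ContDiff ℝ n y) {k : ℕ}
    (hk : k + 1 ≤ n) (x : ℝ) :
    HasDerivAt (iteratedDeriv k y) (iteratedDeriv (k + 1) y x) x := by
  have hd : Differentiable ℝ (iteratedDeriv k y) :=
    hy.differentiable_iteratedDeriv k (by exact_mod_cast Nat.lt_of_succ_le hk)
  have := (hd x).hasDerivAt
  rwa [iteratedDeriv_succ]

private lemma hasDerivAt_int {τh : ℝ} (hτ : 0 < τh) {α' : ℝ → ℝ}
    (hα' : ContinuousOn α' (Set.Icc 0 τh)) {g g' : ℝ → ℝ}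
    (hg : ∀ x, HasDerivAt g (g' x) x) (hg' : Continuous g') (t : ℝ) :
    HasDerivAt (fun x => ∫ τ in (0:ℝ)..τh, α' τ * g (x + τ))
      (∫ τ in (0:ℝ)..τh, α' τ * g' (t + τ)) t := by
  have hgc : Continuous g := Differentiable.continuous fun x => (hg x).differentiableAt
  obtain ⟨C, hC⟩ := (isCompact_Icc (a := t - 1) (b := t + 1 + τh)).exists_bound_of_continuousOn
    hg'.continuousOn
  have huIcc : Set.uIcc (0:ℝ) τh = Set.Icc 0 τh := Set.uIcc_of_le hτ.le
  have huIoc : Set.uIoc (0:ℝ) τh = Set.Ioc 0 τh := Set.uIoc_of_le hτ.le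
  have hsub : Set.uIoc (0:ℝ) τh ⊆ Set.Icc 0 τh := by
    rw [huIoc]; exact Set.Ioc_subset_Icc_self
  have key := intervalIntegral.hasDerivAt_integral_of_dominated_loc_of_deriv_le
    (μ := MeasureTheory.volume) (F := fun x τ => α' τ * g (x + τ))
    (F' := fun x τ => α' τ * g' (x + τ)) (x₀ := t) (a := 0) (b := τh)
    (bound := fun τ => |α' τ| * C) (s := Metric.ball t 1) (Metric.ball_mem_nhds t one_pos)
    (Filter.Eventually.of_forall fun x => by
      exact ((hα'.mono hsub).mul ((hgc.comp (continuous_const.add continuous_id)).continuousOn)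
        ).aestronglyMeasurable measurableSet_uIoc)
    (((hα'.mono huIcc.subset).mul
      ((hgc.comp (continuous_const.add continuous_id)).continuousOn)).intervalIntegrable)
    (((hα'.mono hsub).mul ((hg'.comp (continuous_const.add continuous_id)).continuousOn)
      ).aestronglyMeasurable measurableSet_uIoc)
    (Filter.Eventually.of_forall fun τ hτ' x hx => by
      have hτ'' : τ ∈ Set.Ioc 0 τh := huIoc ▸ hτ'
      have hx' : |x - t| < 1 := by simpa [Real.dist_eq] using hx
      have hmem : x + τ ∈ Set.Icc (t - 1) (t + 1 + τh) := by
        constructor <;> [nlinarith [abs_lt.mp hx', hτ''.1, hτ''.2];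
          nlinarith [abs_lt.mp hx', hτ''.1, hτ''.2]]
      calc ‖α' τ * g' (x + τ)‖ = |α' τ| * ‖g' (x + τ)‖ := by
            simp [abs_mul]
        _ ≤ |α' τ| * C := mul_le_mul_of_nonneg_left (hC _ hmem) (abs_nonneg _))
    (((hα'.mono huIcc.subset).abs.mul continuousOn_const).intervalIntegrable)
    (Filter.Eventually.of_forall fun τ _ x _ => by
      have h1 : HasDerivAt (fun x : ℝ => g (x + τ)) (g' (x + τ)) x := by
        simpa [Function.comp_def] using (hg (x + τ)).comp x ((hasDerivAt_id x).add_const τ)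
      exact h1.const_mul (α' τ))
  exact key.2

/-- General construction of the lumped observer-canonical-form coordinates from a
neutral functional differential equation for the output: they satisfy the
integrator chain with output injection. -/
theorem stmt_13 (n : ℕ) (hn : 1 ≤ n) (a : ℕ → ℝ)
    (τh : ℝ) (hτ : 0 < τh)
    (α' : ℝ → ℝ) (hα' : ContinuousOn α' (Set.Icc 0 τh))
    (y : ℝ → ℝ) (hy : ContDiff ℝ n y)
    (hfde : ∀ t : ℝ,
      (∑ i ∈ Finset.range n, a i * iteratedDeriv i y t) +
        iteratedDeriv n y (t + τh) + iteratedDeriv n y t +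
        (∫ τ in (0:ℝ)..τh, α' τ * iteratedDeriv n y (t + τ)) = 0)
    (η : ℕ → ℝ → ℝ)
    (hη : ∀ i < n, ∀ t : ℝ,
      η (n - i) t = iteratedDeriv i y (t + τh) + iteratedDeriv i y t +
        (∫ τ in (0:ℝ)..τh, α' τ * iteratedDeriv i y (t + τ)) +
        ∑ j ∈ Finset.Icc 1 i, a (n - j) * iteratedDeriv (i - j) y t) :
    (∀ t : ℝ, HasDerivAt (η 1) (-(a 0) * y t) t) ∧
    (∀ i, 2 ≤ i → i ≤ n → ∀ t : ℝ,
      HasDerivAt (η i) (η (i-1) t - a (i-1) * y t) t) := by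
  -- main derivative computation for η (n - k), k + 1 ≤ n
  have hC : ∀ k, k + 1 ≤ n → ∀ t : ℝ,
      HasDerivAt (η (n - k))
        (iteratedDeriv (k+1) y (t + τh) + iteratedDeriv (k+1) y t +
          (∫ τ in (0:ℝ)..τh, α' τ * iteratedDeriv (k+1) y (t + τ)) +
          ∑ j ∈ Finset.Icc 1 k, a (n - j) * iteratedDeriv (k + 1 - j) y t) t := by
    intro k hk t
    have h1 : HasDerivAt (fun x : ℝ => iteratedDeriv k y (x + τh))
        (iteratedDeriv (k+1) y (t + τh)) t := by
      simpa [Function.comp_def] using (hasDerivAt_iter hy hk (t + τh)).comp t ((hasDerivAt_id t).add_const τh)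
    have h2 := hasDerivAt_iter hy hk t
    have h3 : HasDerivAt (fun x : ℝ => ∫ τ in (0:ℝ)..τh, α' τ * iteratedDeriv k y (x + τ))
        (∫ τ in (0:ℝ)..τh, α' τ * iteratedDeriv (k+1) y (t + τ)) t :=
      hasDerivAt_int hτ hα' (hasDerivAt_iter hy hk)
        (hy.continuous_iteratedDeriv (k+1) (by exact_mod_cast hk)) t
    have h4 : HasDerivAt (fun x : ℝ => ∑ j ∈ Finset.Icc 1 k, a (n - j) * iteratedDeriv (k - j) y x)
        (∑ j ∈ Finset.Icc 1 k, a (n - j) * iteratedDeriv (k + 1 - j) y t) t := by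
      apply HasDerivAt.fun_sum
      intro j hj
      have hj' : j ≤ k := (Finset.mem_Icc.mp hj).2
      have heq : k - j + 1 = k + 1 - j := by omega
      have := (hasDerivAt_iter hy (k := k - j) (by omega) t).const_mul (a (n - j))
      rwa [heq] at this
    have := ((h1.add h2).add h3).add h4
    exact this.congr_of_eventuallyEq
      (Filter.Eventually.of_forall fun x => hη k (by omega) x)
  constructor
  · -- i = 1, use k = n - 1
    intro t
    have hk : (n - 1) + 1 ≤ n := by omega
    have h := hC (n - 1) hk t
    rw [show n - (n - 1) = 1 by omega] at h
    rw [show (n - 1) + 1 = n by omega] at h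
    have hsum : iteratedDeriv n y (t + τh) + iteratedDeriv n y t +
        (∫ τ in (0:ℝ)..τh, α' τ * iteratedDeriv n y (t + τ)) =
        -(∑ i ∈ Finset.range n, a i * iteratedDeriv i y t) := by
      have := hfde t; linarith
    have hre : ∑ j ∈ Finset.Icc 1 (n - 1), a (n - j) * iteratedDeriv (n - j) y t =
        ∑ i ∈ Finset.Icc 1 (n - 1), a i * iteratedDeriv i y t := by
      refine Finset.sum_nbij' (i := fun j => n - j) (j := fun i => n - i) ?_ ?_ ?_ ?_ ?_ <;>
        intro x hx <;> simp only [Finset.mem_Icc] at hx ⊢ <;> first | rfl | omega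
    have hsplit : ∑ i ∈ Finset.range n, a i * iteratedDeriv i y t =
        a 0 * iteratedDeriv 0 y t + ∑ i ∈ Finset.Icc 1 (n - 1), a i * iteratedDeriv i y t := by
      have h1 : Finset.Icc 1 (n - 1) = Finset.Ico 1 n := by
        rw [← Finset.Ico_add_one_right_eq_Icc]; congr 1; omega
      rw [h1, Finset.range_eq_Ico,
        ← Finset.sum_Ico_consecutive _ (Nat.zero_le 1) hn]
      simp
    have hval : iteratedDeriv n y (t + τh) + iteratedDeriv n y t +
        (∫ τ in (0:ℝ)..τh, α' τ * iteratedDeriv n y (t + τ)) +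
        ∑ j ∈ Finset.Icc 1 (n - 1), a (n - j) * iteratedDeriv (n - j) y t =
        -(a 0) * y t := by
      rw [hsum, hre, hsplit]
      simp only [iteratedDeriv_zero]
      ring
    rwa [hval] at h
  · intro i hi2 hin t
    set k := n - i with hkdef
    have hk : k + 1 ≤ n := by omega
    have h := hC k hk t
    rw [show n - k = i by omega] at h
    have hηi : η (i - 1) t = iteratedDeriv (k+1) y (t + τh) + iteratedDeriv (k+1) y t +
        (∫ τ in (0:ℝ)..τh, α' τ * iteratedDeriv (k+1) y (t + τ)) +
        ∑ j ∈ Finset.Icc 1 (k+1), a (n - j) * iteratedDeriv (k + 1 - j) y t := by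
      have := hη (k + 1) (by omega) t
      rwa [show n - (k + 1) = i - 1 by omega] at this
    have htop : ∑ j ∈ Finset.Icc 1 (k+1), a (n - j) * iteratedDeriv (k + 1 - j) y t =
        ∑ j ∈ Finset.Icc 1 k, a (n - j) * iteratedDeriv (k + 1 - j) y t +
        a (n - (k + 1)) * iteratedDeriv 0 y t := by
      rw [Finset.sum_Icc_succ_top (by omega), Nat.sub_self]
    have hval : iteratedDeriv (k+1) y (t + τh) + iteratedDeriv (k+1) y t +
        (∫ τ in (0:ℝ)..τh, α' τ * iteratedDeriv (k+1) y (t + τ)) +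
        ∑ j ∈ Finset.Icc 1 k, a (n - j) * iteratedDeriv (k + 1 - j) y t =
        η (i - 1) t - a (i - 1) * y t := by
      rw [hηi, htop, show n - (k + 1) = i - 1 by omega]
      simp only [iteratedDeriv_zero]
      ring
    rwa [hval] at h
end
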